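/- arXiv:1908.03228 — 3 statements merged into one kernel-verified Lean document; each statement's English description precedes it below -/
import Mathlib

section
/- Let A be a group, B an abelian group, and η, ρ : B → Aut(A) homomorphisms with commuting images. Then the structure (A×B, +, ∘) with (x,s)+(y,t) = (x·η_s(y), s+t) and (x,s)∘(y,t) = (x·ρ_s(y), s+t) is a bi-skew brace, i.e. both (A×B,+,∘) and (A×B,∘,+) are skew braces. -/
/-- `(op, e, inv)` is a group structure on `A`. -/
def IsGroupOp {A : Type*} (op : A → A → A) (e : A) (inv : A → A) : Prop :=
  (∀ a b c, op (op a b) c = op a (op b c)) ∧ (∀ a, op e a = a) ∧ (∀ a, op a e = a) ∧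
  (∀ a, op (inv a) a = e) ∧ (∀ a, op a (inv a) = e)

/-- `(A, add, mul)` is a skew left brace: both operations are group operations and
`a ∘ (b + c) = (a ∘ b - a) + a ∘ c`. -/
def IsSkewBrace {A : Type*} (add : A → A → A) (zero : A) (neg : A → A)
    (mul : A → A → A) (one : A) (inv : A → A) : Prop :=
  IsGroupOp add zero neg ∧ IsGroupOp mul one inv ∧
  ∀ a b c, mul a (add b c) = add (add (mul a b) (neg a)) (mul a c)

lemma groupOp_sdp {A B : Type*} [Group A] [CommGroup B] (η : B →* MulAut A) :
    IsGroupOp (fun x y : A × B => (x.1 * η x.2 y.1, x.2 * y.2)) (1, 1)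
      (fun x : A × B => ((η x.2⁻¹ x.1)⁻¹, x.2⁻¹)) := by
  refine ⟨?_, ?_, ?_, ?_, ?_⟩ <;> intros <;>
    simp [Prod.ext_iff, mul_assoc, map_mul, MulAut.mul_apply]

lemma brace_sdp {A B : Type*} [Group A] [CommGroup B]
    (η ρ : B →* MulAut A)
    (hcomm : ∀ s t : B, ∀ a : A, ρ s (η t a) = η t (ρ s a)) :
    IsSkewBrace
      (fun x y : A × B => (x.1 * η x.2 y.1, x.2 * y.2)) (1, 1)
      (fun x : A × B => ((η x.2⁻¹ x.1)⁻¹, x.2⁻¹))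
      (fun x y : A × B => (x.1 * ρ x.2 y.1, x.2 * y.2)) (1, 1)
      (fun x : A × B => ((ρ x.2⁻¹ x.1)⁻¹, x.2⁻¹)) := by
  have hηη : ∀ s t : B, ∀ a : A, η s (η t a) = η t (η s a) := by
    intro s t a
    rw [← MulAut.mul_apply, ← map_mul, mul_comm, map_mul, MulAut.mul_apply]
  refine ⟨groupOp_sdp η, groupOp_sdp ρ, ?_⟩
  rintro ⟨x, s⟩ ⟨y, t⟩ ⟨z, u⟩
  refine Prod.ext ?_ ?_
  · show x * ρ s (y * η t z) =
      x * ρ s y * (η (s*t)) ((η s⁻¹) x)⁻¹ * (η (s*t*s⁻¹)) (x * ρ s z)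
    have h1 : s * t * s⁻¹ = t := by rw [mul_comm s t, mul_assoc, mul_inv_cancel, mul_one]
    have h2 : (η (s*t)) ((η s⁻¹) x) = (η t) x := by
      rw [← MulAut.mul_apply, ← map_mul, h1]
    rw [h1, map_inv, h2, map_mul, map_mul, hcomm]
    simp [mul_assoc]
  · simp [mul_assoc, mul_comm, mul_left_comm]

/-- The semidirect-product construction `G_{η,ρ}` is a bi-skew brace:
both `(A×B, +, ∘)` and `(A×B, ∘, +)` are skew braces. -/
theorem stmt2 {A B : Type*} [Group A] [CommGroup B]
    (η ρ : B →* MulAut A)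
    (hcomm : ∀ s t : B, ∀ a : A, ρ s (η t a) = η t (ρ s a)) :
    IsSkewBrace
      (fun x y : A × B => (x.1 * η x.2 y.1, x.2 * y.2)) (1, 1)
      (fun x : A × B => ((η x.2⁻¹ x.1)⁻¹, x.2⁻¹))
      (fun x y : A × B => (x.1 * ρ x.2 y.1, x.2 * y.2)) (1, 1)
      (fun x : A × B => ((ρ x.2⁻¹ x.1)⁻¹, x.2⁻¹)) ∧
    IsSkewBrace
      (fun x y : A × B => (x.1 * ρ x.2 y.1, x.2 * y.2)) (1, 1)
      (fun x : A × B => ((ρ x.2⁻¹ x.1)⁻¹, x.2⁻¹))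
      (fun x y : A × B => (x.1 * η x.2 y.1, x.2 * y.2)) (1, 1)
      (fun x : A × B => ((η x.2⁻¹ x.1)⁻¹, x.2⁻¹)) :=
  ⟨brace_sdp η ρ hcomm, brace_sdp ρ η fun s t a => (hcomm t s a).symm⟩
end

section
/- Let A be a cyclic group and B an abelian group, with any homomorphisms η, ρ : B → Aut(A). Then (A×B, +, ∘) with (x,s)+(y,t) = (x·η_s(y), s+t) and (x,s)∘(y,t) = (x·ρ_s(y), s+t) is a bi-skew brace. -/
/-- Automorphisms of a cyclic group commute. -/
lemma mulAut_comm_apply' {A : Type*} [Group A] [IsCyclic A] (f h : MulAut A) (a : A) :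
    f (h a) = h (f a) := by
  obtain ⟨g, hg⟩ := IsCyclic.exists_generator (α := A)
  obtain ⟨n, rfl⟩ := hg a
  obtain ⟨k, hk⟩ := hg (f g)
  obtain ⟨m, hm⟩ := hg (h g)
  simp only [map_zpow, ← hk, ← hm, ← zpow_mul]
  ring_nf

/-- The semidirect product operation is a group operation. -/
lemma semidirect_isGroupOp' {A B : Type*} [Group A] [Group B] (η : B →* MulAut A) :
    IsGroupOp (fun x y : A × B => (x.1 * η x.2 y.1, x.2 * y.2)) (1, 1)
      (fun x : A × B => ((η x.2⁻¹ x.1)⁻¹, x.2⁻¹)) := by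
  refine ⟨?_, ?_, ?_, ?_, ?_⟩ <;> intros <;> ext <;>
    first
    | simp [map_mul, mul_assoc, MulAut.mul_apply]
    | simp [map_inv, ← MulAut.mul_apply, ← map_mul]

/-- If the images of `η` and `ρ` commute pointwise, the construction is a skew brace. -/
lemma skew_of_comm' {A B : Type*} [Group A] [CommGroup B] (η ρ : B →* MulAut A)
    (hc : ∀ s t (a : A), η s (ρ t a) = ρ t (η s a)) :
    IsSkewBrace
      (fun x y : A × B => (x.1 * η x.2 y.1, x.2 * y.2)) (1, 1)
      (fun x : A × B => ((η x.2⁻¹ x.1)⁻¹, x.2⁻¹))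
      (fun x y : A × B => (x.1 * ρ x.2 y.1, x.2 * y.2)) (1, 1)
      (fun x : A × B => ((ρ x.2⁻¹ x.1)⁻¹, x.2⁻¹)) := by
  refine ⟨semidirect_isGroupOp' η, semidirect_isGroupOp' ρ, ?_⟩
  rintro ⟨x, s⟩ ⟨y, t⟩ ⟨z, u⟩
  have h1 : s * t * s⁻¹ = t := by rw [mul_comm s t, mul_inv_cancel_right]
  have h2 : η (s * t) ((η s⁻¹ x)⁻¹) = (η t x)⁻¹ := by
    rw [map_inv, ← MulAut.mul_apply, ← map_mul, mul_comm s t, mul_inv_cancel_right]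
  ext
  · show x * ρ s (y * η t z) =
      x * ρ s y * η (s * t) ((η s⁻¹ x)⁻¹) * (η (s * t * s⁻¹) (x * ρ s z))
    rw [h1, h2, map_mul (ρ s), map_mul (η t), hc t s z]
    group
  · show s * (t * u) = s * t * s⁻¹ * (s * u)
    group

/-- For `A` cyclic (so `Aut A` is abelian) and `B` abelian, with any homomorphisms
`η, ρ : B →* Aut A`, the construction `G_{η,ρ}` is a bi-skew brace. -/
theorem stmt3 {A B : Type*} [Group A] [IsCyclic A] [CommGroup B]
    (η ρ : B →* MulAut A) :
    IsSkewBrace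
      (fun x y : A × B => (x.1 * η x.2 y.1, x.2 * y.2)) (1, 1)
      (fun x : A × B => ((η x.2⁻¹ x.1)⁻¹, x.2⁻¹))
      (fun x y : A × B => (x.1 * ρ x.2 y.1, x.2 * y.2)) (1, 1)
      (fun x : A × B => ((ρ x.2⁻¹ x.1)⁻¹, x.2⁻¹)) ∧
    IsSkewBrace
      (fun x y : A × B => (x.1 * ρ x.2 y.1, x.2 * y.2)) (1, 1)
      (fun x : A × B => ((ρ x.2⁻¹ x.1)⁻¹, x.2⁻¹))
      (fun x y : A × B => (x.1 * η x.2 y.1, x.2 * y.2)) (1, 1)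
      (fun x : A × B => ((η x.2⁻¹ x.1)⁻¹, x.2⁻¹)) := by
  exact ⟨skew_of_comm' η ρ (fun s t a => mulAut_comm_apply' (η s) (ρ t) a),
    skew_of_comm' ρ η (fun s t a => mulAut_comm_apply' (ρ s) (η t) a)⟩
end

section
/- Let p > q be primes with p ≡ 1 (mod q) and C the cyclic group of order pq. All the regular subgroups G_b = ⟨σ, τ^b α⟩ (1 ≤ b ≤ q-1) of Hol(C) are conjugate to each other under the action of Aut(C) by conjugation inside Hol(C). Consequently there is exactly one non-trivial skew brace with additive group cyclic of order pq. -/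
/-- The subgroup `G_b = ⟨σ, τ^b α⟩` of `Hol(C) ≤ Perm(C)`, `C = ℤ_p × ℤ_q`, where
`σ, τ` are the translations by `(1,0), (0,1)` and `α(n,m) = (g·n, m)`. -/
def Gb (p q : ℕ) (g : (ZMod p)ˣ) (b : ℕ) : Subgroup (Equiv.Perm (ZMod p × ZMod q)) :=
  Subgroup.closure
    {Equiv.addLeft ((1, 0) : ZMod p × ZMod q),
      (Equiv.addLeft ((0, 1) : ZMod p × ZMod q)) ^ b *
        Equiv.prodCongr (Units.mulLeft g) (Equiv.refl (ZMod q))}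

open Multiplicative

/-- A copy of `A` carrying the group law `op`, kept apart from any multiplication `A` already has
(such as the ring structure of `ZMod p × ZMod q`). -/
@[ext]
structure OpGroup {A : Type*} (op : A → A → A) (e : A) (inv : A → A) where
  ofVal ::
  val : A

namespace OpGroup

variable {A : Type*} {op : A → A → A} {e : A} {inv : A → A}

instance [h : Fact (IsGroupOp op e inv)] : Group (OpGroup op e inv) where
  mul x y := ⟨op x.val y.val⟩
  one := ⟨e⟩
  inv x := ⟨inv x.val⟩
  mul_assoc x y z := congrArg ofVal (h.out.1 x.val y.val z.val)
  one_mul x := congrArg ofVal (h.out.2.1 x.val)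
  mul_one x := congrArg ofVal (h.out.2.2.1 x.val)
  inv_mul_cancel x := congrArg ofVal (h.out.2.2.2.1 x.val)

@[simp] theorem val_mul [Fact (IsGroupOp op e inv)] (x y : OpGroup op e inv) :
    (x * y).val = op x.val y.val := rfl

@[simp] theorem val_one [Fact (IsGroupOp op e inv)] : (1 : OpGroup op e inv).val = e := rfl

def valEquiv : OpGroup op e inv ≃ A := ⟨val, ofVal, fun _ => rfl, fun _ => rfl⟩

instance [Finite A] : Finite (OpGroup op e inv) := .of_equiv A valEquiv.symm

end OpGroup

theorem MonoidHom.eq_one_of_coprime_card {G H : Type*} [Group G] [Group H] [Finite G] [Finite H]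
    (hGH : (Nat.card G).Coprime (Nat.card H)) (f : G →* H) : f = 1 := by
  ext x
  have hdvd : orderOf (f x) ∣ Nat.card G := (orderOf_map_dvd f x).trans (orderOf_dvd_natCard x)
  exact orderOf_eq_one_iff.mp <|
    Nat.Coprime.eq_one_of_dvd (Nat.Coprime.coprime_dvd_left hdvd hGH) (orderOf_dvd_natCard _)

theorem IsCyclic.mem_zpowers_of_pow_orderOf_eq_one {G : Type*} [CommGroup G] [IsCyclic G]
    [Finite G] {x y : G} (hy : y ^ orderOf x = 1) : y ∈ Subgroup.zpowers x := by
  have hle : Subgroup.zpowers x ≤ (powMonoidHom (orderOf x) : G →* G).ker :=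
    Subgroup.zpowers_le.mpr (pow_orderOf_eq_one x)
  have hcard :
      Nat.card (powMonoidHom (orderOf x) : G →* G).ker ≤ Nat.card (Subgroup.zpowers x) := by
    rw [IsCyclic.card_powMonoidHom_ker, Nat.card_zpowers]
    exact Nat.gcd_le_right _ (orderOf_pos x)
  rw [Subgroup.eq_of_le_of_card_ge hle hcard]
  exact hy

theorem MonoidHom.map_ofAdd_intCast {S G : Type*} [Ring S] [Group G]
    (H : Multiplicative S →* G) (k : ℤ) : H (ofAdd (k : S)) = H (ofAdd 1) ^ k := by
  rw [← zsmul_one, ofAdd_zsmul, map_zpow]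

theorem MonoidHom.map_pow_card_eq_one {q : ℕ} {G : Type*} [Monoid G]
    (H : Multiplicative (ZMod q) →* G) (m : Multiplicative (ZMod q)) : H m ^ q = 1 := by
  rw [← map_pow, ← ofAdd_toAdd m, ← ofAdd_nsmul, nsmul_eq_mul, ZMod.natCast_self, zero_mul,
    ofAdd_zero, map_one]

theorem MonoidHom.exists_unit_map_ofAdd_mul_eq {q : ℕ} [Fact q.Prime] {G : Type*} [CommGroup G]
    [IsCyclic G] [Finite G] {H H' : Multiplicative (ZMod q) →* G} (hH : H ≠ 1) (hH' : H' ≠ 1) :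
    ∃ c : (ZMod q)ˣ, ∀ m, H' (ofAdd (c * m)) = H (ofAdd m) := by
  have eq_one_of_gen : ∀ K : Multiplicative (ZMod q) →* G, K (ofAdd 1) = 1 → K = 1 :=
    fun K hK => MonoidHom.ext fun m => by
      obtain ⟨k, hk⟩ := ZMod.intCast_surjective (toAdd m)
      rw [← ofAdd_toAdd m, ← hk, K.map_ofAdd_intCast, hK, one_zpow, one_apply]
  have hord : orderOf (H' (ofAdd 1)) = q :=
    orderOf_eq_prime (H'.map_pow_card_eq_one _) fun h => hH' (eq_one_of_gen H' h)
  obtain ⟨k, hk⟩ := Subgroup.mem_zpowers_iff.mp <|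
    IsCyclic.mem_zpowers_of_pow_orderOf_eq_one (x := H' (ofAdd 1)) (y := H (ofAdd 1))
      (by rw [hord, H.map_pow_card_eq_one])
  have hk' : ∀ j : ℤ, H' (ofAdd ((k : ZMod q) * j)) = H (ofAdd j) := fun j => by
    rw [← Int.cast_mul, H'.map_ofAdd_intCast, H.map_ofAdd_intCast, zpow_mul, hk]
  have hk0 : (k : ZMod q) ≠ 0 := fun h0 => hH <| eq_one_of_gen H <| by
    simpa [h0] using (hk' 1).symm
  refine ⟨Units.mk0 _ hk0, fun m => ?_⟩
  obtain ⟨j, rfl⟩ := ZMod.intCast_surjective m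
  exact hk' j

theorem ZMod.intCast_prod_surjective {m n : ℕ} (hmn : m.Coprime n) :
    Function.Surjective (Int.cast : ℤ → ZMod m × ZMod n) := fun x => by
  obtain ⟨k, hk⟩ := ZMod.intCast_surjective ((ZMod.chineseRemainder hmn).symm x)
  exact ⟨k, by rw [← map_intCast (ZMod.chineseRemainder hmn), hk, RingEquiv.apply_symm_apply]⟩

theorem Function.Semiconj₂.equiv_symm {α β : Type*} {e : α ≃ β} {ga : α → α → α}
    {gb : β → β → β} (h : Semiconj₂ e ga gb) : Semiconj₂ e.symm gb ga := fun x y =>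
  e.injective (by simp [h.eq])

theorem Equiv.addLeft_pow {A : Type*} [AddGroup A] (v : A) (n : ℕ) :
    Equiv.addLeft v ^ n = Equiv.addLeft (n • v) := by
  induction n with
  | zero => ext; simp
  | succ n ih => ext; simp [pow_succ, ih, succ_nsmul]

theorem MulAut.conj_addLeft {A : Type*} [AddGroup A] (f : A ≃+ A) (v : A) :
    MulAut.conj (f.toEquiv : Equiv.Perm A) (Equiv.addLeft v) = Equiv.addLeft (f v) := by
  ext x
  simp [Equiv.Perm.mul_apply, Equiv.Perm.inv_def]

section SkewBrace

variable {A : Type*} [AddCommGroup A] {mul : A → A → A} {one : A} {inv : A → A}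

theorem IsSkewBrace.mul_zero (h : IsSkewBrace (· + ·) 0 (- ·) mul one inv) (a : A) :
    mul a 0 = a := by
  have := h.2.2 a 0 0
  simp only [add_zero] at this
  exact eq_of_add_neg_eq_zero (add_eq_right.mp this.symm)

theorem IsSkewBrace.one_eq_zero (h : IsSkewBrace (· + ·) 0 (- ·) mul one inv) : one = 0 := by
  rw [← h.mul_zero one]
  exact h.2.1.2.1 0

theorem IsSkewBrace.transport {A B : Type*} [AddCommGroup B] (E : A ≃ B)
    {add : A → A → A} {zero : A} {neg : A → A} {mul : A → A → A} {one : A} {inv : A → A}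
    (h : IsSkewBrace add zero neg mul one inv) (hE : ∀ a b, E (add a b) = E a + E b) :
    IsSkewBrace (· + ·) 0 (- ·) (fun x y => E (mul (E.symm x) (E.symm y))) (E one)
      (fun x => E (inv (E.symm x))) := by
  obtain ⟨⟨-, -, add_zero', neg_add', -⟩, ⟨mul_assoc', one_mul', mul_one', inv_mul', mul_inv'⟩,
    hcompat⟩ := h
  have hzero : E zero = 0 := by simpa [hE] using congrArg E (add_zero' zero)
  have hneg : ∀ a, E (neg a) = -E a := fun a =>
    eq_neg_of_add_eq_zero_left (by rw [← hE, neg_add', hzero])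
  have hsymm : ∀ x y, E.symm (x + y) = add (E.symm x) (E.symm y) := fun x y =>
    E.symm_apply_eq.mpr (by simp [hE])
  refine ⟨⟨add_assoc, zero_add, add_zero, neg_add_cancel, add_neg_cancel⟩,
    ⟨?_, ?_, ?_, ?_, ?_⟩, ?_⟩ <;> intros <;>
    simp [mul_assoc', one_mul', mul_one', inv_mul', mul_inv', hsymm, hcompat, hE, hneg]

end SkewBrace

section Scalar

variable {R : Type*} [CommRing R] {mul : R → R → R} {one : R} {inv : R → R}

/-- `λ_a 1`, where `a ∘ b = a + λ_a b`. -/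
def braceScalar (mul : R → R → R) (a : R) : R := -a + mul a 1

theorem IsSkewBrace.mul_eq_add_braceScalar_mul (hR : Function.Surjective (Int.cast : ℤ → R))
    (h : IsSkewBrace (· + ·) 0 (- ·) mul one inv) (a b : R) :
    mul a b = a + braceScalar mul a * b := by
  let lam : R →+ R := AddMonoidHom.mk' (fun b => -a + mul a b) fun b c => by
    simp only [h.2.2 a b c]
    abel
  obtain ⟨k, rfl⟩ := hR b
  have hk : lam k = k • lam 1 := by rw [← map_zsmul, zsmul_one]
  simp only [lam, AddMonoidHom.mk'_apply, zsmul_eq_mul] at hk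
  rw [braceScalar, mul_comm, ← hk]
  abel

theorem IsSkewBrace.braceScalar_one (h : IsSkewBrace (· + ·) 0 (- ·) mul one inv) :
    braceScalar mul one = 1 := by
  rw [braceScalar, h.2.1.2.1, h.one_eq_zero, neg_zero, zero_add]

theorem IsSkewBrace.braceScalar_mul (hR : Function.Surjective (Int.cast : ℤ → R))
    (h : IsSkewBrace (· + ·) 0 (- ·) mul one inv) (a b : R) :
    braceScalar mul (mul a b) = braceScalar mul a * braceScalar mul b := by
  have hform := h.mul_eq_add_braceScalar_mul hR
  linear_combination (-1 : R) * hform (mul a b) 1 + h.2.1.1 a b 1 + hform a (mul b 1) -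
    hform a b + braceScalar mul a * hform b 1

def IsSkewBrace.scalarHom (hR : Function.Surjective (Int.cast : ℤ → R))
    (h : IsSkewBrace (· + ·) 0 (- ·) mul one inv) [Fact (IsGroupOp mul one inv)] :
    OpGroup mul one inv →* R where
  toFun x := braceScalar mul x.val
  map_one' := h.braceScalar_one
  map_mul' x y := h.braceScalar_mul hR x.val y.val

end Scalar

section Semidirect

variable {R S : Type*} [Ring R] [AddCommGroup S]

/-- The multiplication of `R ⋊_H S` on the set `R × S`. -/
def semidirectMul (H : Multiplicative S →* Rˣ) (a b : R × S) : R × S :=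
  (a.1 + H (ofAdd a.2) * b.1, a.2 + b.2)

theorem isSkewBrace_semidirectMul (H : Multiplicative S →* Rˣ) :
    IsSkewBrace (· + ·) 0 (- ·) (semidirectMul H) 0
      (fun a => (-(H (ofAdd (-a.2)) * a.1), -a.2)) := by
  refine ⟨⟨add_assoc, zero_add, add_zero, neg_add_cancel, add_neg_cancel⟩,
    ⟨?_, ?_, ?_, ?_, ?_⟩, ?_⟩ <;> intros <;> ext <;>
    simp [semidirectMul, ofAdd_add, mul_add, ← mul_assoc, add_assoc]

theorem semidirectMul_eq_add_iff (H : Multiplicative S →* Rˣ) :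
    (∀ a b, semidirectMul H a b = a + b) ↔ H = 1 := by
  refine ⟨fun h => MonoidHom.ext fun m => Units.ext ?_,
    fun h a b => by simp [semidirectMul, h]; rfl⟩
  simpa [semidirectMul] using congrArg Prod.fst (h (0, toAdd m) (1, 0))

def scaleSnd (R : Type*) [AddCommGroup R] {S : Type*} [Ring S] (c : Sˣ) : R × S ≃+ R × S :=
  (AddEquiv.refl R).prodCongr (DistribMulAction.toAddEquiv S c)

@[simp] theorem scaleSnd_apply {S : Type*} [Ring S] (c : Sˣ) (x : R × S) :
    scaleSnd R c x = (x.1, c * x.2) := rfl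

@[simp] theorem scaleSnd_symm_apply {S : Type*} [Ring S] (c : Sˣ) (x : R × S) :
    (scaleSnd R c).symm x = (x.1, ↑c⁻¹ * x.2) := rfl

theorem scaleSnd_semidirectMul {S : Type*} [CommRing S] {H H' : Multiplicative S →* Rˣ}
    (c : Sˣ) (hH : ∀ m, H' (ofAdd (c * m)) = H (ofAdd m)) (a b : R × S) :
    scaleSnd R c (semidirectMul H a b) = semidirectMul H' (scaleSnd R c a) (scaleSnd R c b) := by
  simp [semidirectMul, hH, mul_add]

end Semidirect

section Classification

variable {p q : ℕ} [Fact p.Prime] [Fact q.Prime]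
  {mul : ZMod p × ZMod q → ZMod p × ZMod q → ZMod p × ZMod q} {one : ZMod p × ZMod q}
  {inv : ZMod p × ZMod q → ZMod p × ZMod q}

theorem ZMod.intCast_prod_surjective_of_lt (hqp : q < p) :
    Function.Surjective (Int.cast : ℤ → ZMod p × ZMod q) :=
  ZMod.intCast_prod_surjective <| (Nat.coprime_primes Fact.out Fact.out).mpr hqp.ne'

theorem IsSkewBrace.snd_braceScalar (hqp : q < p) (h : IsSkewBrace (· + ·) 0 (- ·) mul one inv)
    (a : ZMod p × ZMod q) : (braceScalar mul a).2 = 1 := by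
  have : Fact (IsGroupOp mul one inv) := ⟨h.2.1⟩
  have hq : 2 ≤ q := (Fact.out : q.Prime).two_le
  have hcop : (Nat.card (OpGroup mul one inv)).Coprime (Nat.card (ZMod q)ˣ) := by
    rw [Nat.card_congr OpGroup.valEquiv, Nat.card_prod, Nat.card_zmod, Nat.card_zmod,
      Nat.card_eq_fintype_card, ZMod.card_units]
    exact Nat.Coprime.mul_left (Nat.coprime_of_lt_prime (by omega) (by omega) Fact.out)
      (Nat.coprime_of_lt_prime (by omega) (by omega) Fact.out)
  have := MonoidHom.eq_one_of_coprime_card hcop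
    ((MonoidHom.snd _ _).comp (h.scalarHom (ZMod.intCast_prod_surjective_of_lt hqp))).toHomUnits
  exact congrArg Units.val (DFunLike.congr_fun this ⟨a⟩)

theorem IsSkewBrace.mul_eq_mk (hqp : q < p) (h : IsSkewBrace (· + ·) 0 (- ·) mul one inv)
    (a b : ZMod p × ZMod q) : mul a b = (a.1 + (braceScalar mul a).1 * b.1, a.2 + b.2) := by
  rw [h.mul_eq_add_braceScalar_mul (ZMod.intCast_prod_surjective_of_lt hqp)]
  ext <;> simp [h.snd_braceScalar hqp]

theorem IsSkewBrace.fst_braceScalar_of_snd_eq_zero (hqp : q < p)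
    (h : IsSkewBrace (· + ·) 0 (- ·) mul one inv) (n : ZMod p) :
    (braceScalar mul (n, 0)).1 = 1 := by
  have : Fact (IsGroupOp mul one inv) := ⟨h.2.1⟩
  let π : OpGroup mul one inv →* Multiplicative (ZMod q) :=
    { toFun x := ofAdd x.val.2
      map_one' := by simp [h.one_eq_zero]
      map_mul' x y := by simp [h.mul_eq_mk hqp] }
  have hker : Nat.card π.ker = p := by
    refine (Nat.card_congr ⟨fun x => x.1.val.1, fun n => ⟨⟨(n, 0)⟩, rfl⟩,
      fun ⟨⟨(n, m)⟩, hx⟩ => ?_, fun _ => rfl⟩).trans (Nat.card_zmod p)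
    obtain rfl : m = 0 := hx
    rfl
  have hp : 2 ≤ p := (Fact.out : p.Prime).two_le
  have hcop : (Nat.card π.ker).Coprime (Nat.card (ZMod p)ˣ) := by
    rw [hker, Nat.card_eq_fintype_card, ZMod.card_units]
    exact Nat.coprime_of_lt_prime (by omega) (by omega) Fact.out
  let s := (MonoidHom.fst _ _).comp (h.scalarHom (ZMod.intCast_prod_surjective_of_lt hqp))
  have := MonoidHom.eq_one_of_coprime_card hcop (s.toHomUnits.comp π.ker.subtype)
  exact congrArg Units.val (DFunLike.congr_fun this ⟨⟨(n, 0)⟩, rfl⟩)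

theorem IsSkewBrace.fst_braceScalar_eq (hqp : q < p)
    (h : IsSkewBrace (· + ·) 0 (- ·) mul one inv) (a : ZMod p × ZMod q) :
    (braceScalar mul a).1 = (braceScalar mul (0, a.2)).1 := by
  have hsplit : mul (a.1, 0) (0, a.2) = a := by simp [h.mul_eq_mk hqp]
  rw [← hsplit, h.braceScalar_mul (ZMod.intCast_prod_surjective_of_lt hqp), Prod.fst_mul,
    h.fst_braceScalar_of_snd_eq_zero hqp, one_mul, hsplit]

theorem IsSkewBrace.exists_eq_semidirectMul (hqp : q < p)
    (h : IsSkewBrace (· + ·) 0 (- ·) mul one inv) :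
    ∃ H : Multiplicative (ZMod q) →* (ZMod p)ˣ, mul = semidirectMul H := by
  have : Fact (IsGroupOp mul one inv) := ⟨h.2.1⟩
  let σ : Multiplicative (ZMod q) →* OpGroup mul one inv :=
    { toFun m := ⟨(0, toAdd m)⟩
      map_one' := OpGroup.ext (by simp [h.one_eq_zero])
      map_mul' m m' := OpGroup.ext (by simp [h.mul_eq_mk hqp]) }
  let s := (MonoidHom.fst _ _).comp (h.scalarHom (ZMod.intCast_prod_surjective_of_lt hqp))
  refine ⟨s.toHomUnits.comp σ, funext₂ fun a b => ?_⟩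
  rw [h.mul_eq_mk hqp, h.fst_braceScalar_eq hqp]
  rfl

end Classification

theorem IsSkewBrace.exists_equiv_semidirectMul {p q : ℕ} [Fact p.Prime] [Fact q.Prime]
    (hqp : q < p) {A : Type*} {add : A → A → A} {zero : A} {neg : A → A} {mul : A → A → A}
    {one : A} {inv : A → A} (h : IsSkewBrace add zero neg mul one inv)
    (E : A ≃ ZMod p × ZMod q) (hE : Function.Semiconj₂ E add (· + ·))
    (hnt : ∃ a b, mul a b ≠ add a b) {H₀ : Multiplicative (ZMod q) →* (ZMod p)ˣ} (hH₀ : H₀ ≠ 1) :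
    ∃ e : A ≃ ZMod p × ZMod q,
      Function.Semiconj₂ e add (· + ·) ∧ Function.Semiconj₂ e mul (semidirectMul H₀) := by
  obtain ⟨H, hH⟩ := (h.transport E hE).exists_eq_semidirectMul hqp
  have hmul : ∀ a b, E (mul a b) = semidirectMul H (E a) (E b) := fun a b => by
    simpa using congrFun₂ hH (E a) (E b)
  have hH1 : H ≠ 1 := by
    rintro rfl
    obtain ⟨a, b, hab⟩ := hnt
    exact hab (E.injective (by rw [hmul, (semidirectMul_eq_add_iff 1).mpr rfl, hE.eq]))
  obtain ⟨c, hc⟩ := MonoidHom.exists_unit_map_ofAdd_mul_eq hH1 hH₀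
  refine ⟨E.trans (scaleSnd (ZMod p) c).toEquiv, fun a b => ?_, fun a b => ?_⟩
  · simp [hE.eq, mul_add]
  · simp only [Equiv.trans_apply, AddEquiv.toEquiv_eq_coe, AddEquiv.coe_toEquiv, hmul,
      scaleSnd_semidirectMul c hc]

def zmodPowHom {G : Type*} [Monoid G] {q : ℕ} [NeZero q] (g : G) (hg : orderOf g = q) :
    Multiplicative (ZMod q) →* G where
  toFun m := g ^ (toAdd m).val
  map_one' := by simp
  map_mul' m m' := by
    have hmod := pow_mod_orderOf g ((toAdd m).val + (toAdd m').val)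
    rw [hg] at hmod
    rw [toAdd_mul, ZMod.val_add, hmod, pow_add]

theorem zmodPowHom_ne_one {G : Type*} [Monoid G] {q : ℕ} [Fact (1 < q)] {g : G}
    (hg : orderOf g = q) : zmodPowHom g hg ≠ 1 := fun h => by
  have hg1 : g = 1 := by simpa [zmodPowHom, ZMod.val_one] using DFunLike.congr_fun h (ofAdd 1)
  rw [hg1, orderOf_one] at hg
  exact (Fact.out : 1 < q).ne hg

theorem map_conj_scaleSnd_Gb {p q : ℕ} (g : (ZMod p)ˣ) (c : (ZMod q)ˣ) {b b' : ℕ}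
    (hbb' : (c : ZMod q) * b = b') :
    (Gb p q g b).map (MulAut.conj ((scaleSnd (ZMod p) c).toEquiv : Equiv.Perm _)).toMonoidHom =
      Gb p q g b' := by
  have hα : MulAut.conj ((scaleSnd (ZMod p) c).toEquiv : Equiv.Perm _)
      (Equiv.prodCongr (Units.mulLeft g) (Equiv.refl (ZMod q))) =
      Equiv.prodCongr (Units.mulLeft g) (Equiv.refl (ZMod q)) := by
    ext x <;> simp [Equiv.Perm.mul_apply, Equiv.Perm.inv_def]
  rw [Gb, Gb, MonoidHom.map_closure, Set.image_pair]
  have hσ : scaleSnd (ZMod p) c (1, 0) = (1, 0) := by simp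
  have hτ : scaleSnd (ZMod p) c (b • (0, 1)) = b' • (0, 1) := by ext <;> simp [← hbb']
  simp only [MulEquiv.coe_toMonoidHom, map_mul, hα, MulAut.conj_addLeft, Equiv.addLeft_pow, hσ,
    hτ]

theorem exists_map_conj_Gb_eq {p q : ℕ} [Fact q.Prime] (g : (ZMod p)ˣ) {b b' : ℕ}
    (hb : (b : ZMod q) ≠ 0) (hb' : (b' : ZMod q) ≠ 0) :
    ∃ f : (ZMod p × ZMod q) ≃+ (ZMod p × ZMod q),
      (Gb p q g b).map (MulAut.conj (f.toEquiv : Equiv.Perm _)).toMonoidHom = Gb p q g b' :=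
  ⟨scaleSnd (ZMod p) (Units.mk0 _ hb' * (Units.mk0 _ hb)⁻¹),
    map_conj_scaleSnd_Gb g _ (by simp [hb])⟩

theorem exists_isSkewBrace_zmod_mul {p q : ℕ} (hpq : p.Coprime q)
    {H : Multiplicative (ZMod q) →* (ZMod p)ˣ} (hH : H ≠ 1) :
    ∃ (mul : ZMod (p * q) → ZMod (p * q) → ZMod (p * q)) (one : ZMod (p * q))
      (inv : ZMod (p * q) → ZMod (p * q)),
      IsSkewBrace (· + ·) 0 (- ·) mul one inv ∧ ∃ a b, mul a b ≠ a + b := by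
  let χ := ZMod.chineseRemainder hpq
  obtain ⟨a, b, hab⟩ : ∃ a b, semidirectMul H a b ≠ a + b := by
    simpa using (semidirectMul_eq_add_iff H).not.mpr hH
  refine ⟨_, _, _, (isSkewBrace_semidirectMul H).transport χ.symm.toEquiv (map_add χ.symm),
    χ.symm a, χ.symm b, ?_⟩
  simpa [← map_add] using hab

theorem stmt13_general (p q : ℕ) (hp : p.Prime) (hq : q.Prime) (hlt : q < p)
    (g : (ZMod p)ˣ) (hg : orderOf g = q) :
    (∀ b b' : ℕ, 1 ≤ b → b ≤ q - 1 → 1 ≤ b' → b' ≤ q - 1 →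
      ∃ f : (ZMod p × ZMod q) ≃+ (ZMod p × ZMod q),
        Subgroup.map
          (MulAut.conj (f.toEquiv : Equiv.Perm (ZMod p × ZMod q))).toMonoidHom
          (Gb p q g b) = Gb p q g b') ∧
    -- existence of a non-trivial skew brace with cyclic additive group of order `pq`
    (∃ (mul : ZMod (p * q) → ZMod (p * q) → ZMod (p * q)) (one : ZMod (p * q))
        (inv : ZMod (p * q) → ZMod (p * q)),
      IsSkewBrace (· + ·) 0 (- ·) mul one inv ∧ ∃ a b, mul a b ≠ a + b) ∧
    -- uniqueness: any two non-trivial skew braces with cyclic additive group of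
    -- order `pq` are isomorphic
    (∀ (A₁ A₂ : Type) (add₁ : A₁ → A₁ → A₁) (zero₁ : A₁) (neg₁ : A₁ → A₁)
        (mul₁ : A₁ → A₁ → A₁) (one₁ : A₁) (inv₁ : A₁ → A₁)
        (add₂ : A₂ → A₂ → A₂) (zero₂ : A₂) (neg₂ : A₂ → A₂)
        (mul₂ : A₂ → A₂ → A₂) (one₂ : A₂) (inv₂ : A₂ → A₂),
      IsSkewBrace add₁ zero₁ neg₁ mul₁ one₁ inv₁ →
      IsSkewBrace add₂ zero₂ neg₂ mul₂ one₂ inv₂ →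
      (∃ e : A₁ ≃ ZMod (p * q), ∀ a b, e (add₁ a b) = e a + e b) →
      (∃ e : A₂ ≃ ZMod (p * q), ∀ a b, e (add₂ a b) = e a + e b) →
      (∃ a b, mul₁ a b ≠ add₁ a b) → (∃ a b, mul₂ a b ≠ add₂ a b) →
      ∃ e : A₁ ≃ A₂, (∀ a b, e (add₁ a b) = add₂ (e a) (e b)) ∧
        (∀ a b, e (mul₁ a b) = mul₂ (e a) (e b))) := by
  have : Fact p.Prime := ⟨hp⟩
  have : Fact q.Prime := ⟨hq⟩
  have hpq : p.Coprime q := (Nat.coprime_primes hp hq).mpr hlt.ne'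
  have hne : ∀ b : ℕ, 1 ≤ b → b ≤ q - 1 → (b : ZMod q) ≠ 0 := fun b hb1 hb2 => by
    rw [Ne, ZMod.natCast_eq_zero_iff]
    exact Nat.not_dvd_of_pos_of_lt hb1 (by omega)
  have hH₀ := zmodPowHom_ne_one hg
  refine ⟨fun b b' hb1 hb2 hb'1 hb'2 => exists_map_conj_Gb_eq g (hne b hb1 hb2) (hne b' hb'1 hb'2),
    exists_isSkewBrace_zmod_mul hpq hH₀, ?_⟩
  rintro A₁ A₂ add₁ _ _ mul₁ _ _ add₂ _ _ mul₂ _ _ h₁ h₂ ⟨e₁, he₁⟩ ⟨e₂, he₂⟩ hnt₁ hnt₂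
  let χ := ZMod.chineseRemainder hpq
  obtain ⟨f₁, hf₁add, hf₁mul⟩ := h₁.exists_equiv_semidirectMul hlt (e₁.trans χ.toEquiv)
    (fun a b => by simp [he₁]) hnt₁ hH₀
  obtain ⟨f₂, hf₂add, hf₂mul⟩ := h₂.exists_equiv_semidirectMul hlt (e₂.trans χ.toEquiv)
    (fun a b => by simp [he₂]) hnt₂ hH₀
  exact ⟨f₁.trans f₂.symm, hf₂add.equiv_symm.comp hf₁add, hf₂mul.equiv_symm.comp hf₁mul⟩

/-- All the regular subgroups `G_b = ⟨σ, τ^b α⟩` (`1 ≤ b ≤ q-1`) of `Hol(C)` are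
conjugate under `Aut(C)`; consequently, there is exactly one non-trivial skew brace
with cyclic additive group of order `pq` up to isomorphism. -/
theorem stmt13 (p q : ℕ) (hp : p.Prime) (hq : q.Prime) (hlt : q < p)
    (hmod : p % q = 1) (g : (ZMod p)ˣ) (hg : orderOf g = q) :
    (∀ b b' : ℕ, 1 ≤ b → b ≤ q - 1 → 1 ≤ b' → b' ≤ q - 1 →
      ∃ f : (ZMod p × ZMod q) ≃+ (ZMod p × ZMod q),
        Subgroup.map
          (MulAut.conj (f.toEquiv : Equiv.Perm (ZMod p × ZMod q))).toMonoidHom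
          (Gb p q g b) = Gb p q g b') ∧
    -- existence of a non-trivial skew brace with cyclic additive group of order `pq`
    (∃ (mul : ZMod (p * q) → ZMod (p * q) → ZMod (p * q)) (one : ZMod (p * q))
        (inv : ZMod (p * q) → ZMod (p * q)),
      IsSkewBrace (· + ·) 0 (- ·) mul one inv ∧ ∃ a b, mul a b ≠ a + b) ∧
    -- uniqueness: any two non-trivial skew braces with cyclic additive group of
    -- order `pq` are isomorphic
    (∀ (A₁ A₂ : Type) (add₁ : A₁ → A₁ → A₁) (zero₁ : A₁) (neg₁ : A₁ → A₁)
        (mul₁ : A₁ → A₁ → A₁) (one₁ : A₁) (inv₁ : A₁ → A₁)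
        (add₂ : A₂ → A₂ → A₂) (zero₂ : A₂) (neg₂ : A₂ → A₂)
        (mul₂ : A₂ → A₂ → A₂) (one₂ : A₂) (inv₂ : A₂ → A₂),
      IsSkewBrace add₁ zero₁ neg₁ mul₁ one₁ inv₁ →
      IsSkewBrace add₂ zero₂ neg₂ mul₂ one₂ inv₂ →
      (∃ e : A₁ ≃ ZMod (p * q), ∀ a b, e (add₁ a b) = e a + e b) →
      (∃ e : A₂ ≃ ZMod (p * q), ∀ a b, e (add₂ a b) = e a + e b) →
      (∃ a b, mul₁ a b ≠ add₁ a b) → (∃ a b, mul₂ a b ≠ add₂ a b) →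
      ∃ e : A₁ ≃ A₂, (∀ a b, e (add₁ a b) = add₂ (e a) (e b)) ∧
        (∀ a b, e (mul₁ a b) = mul₂ (e a) (e b))) :=
  stmt13_general p q hp hq hlt g hg
end
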